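/- If W ⊆ Σ^ω is positional over Eve-games, then W is progress consistent: for all u, v ∈ Σ* with v nonempty, if u⁻¹W ⊊ (uv)⁻¹W then u·v^ω ∈ W. -/

import Mathlib

/-! The game is a lasso reading `u` and then looping on `v`, with one exit at the entry of the
loop that reads a word `x ∈ (uv)⁻¹W \ u⁻¹W`. The play `u v x` is winning from the start, so the
positional strategy wins there; at the loop entry it either always loops, producing `u v^ω`,
or always exits, producing `u x ∉ W`. -/

universe u

/-- Concatenation of a finite word with an infinite word. -/
def wcat {A : Type*} (u : List A) (x : ℕ → A) : ℕ → A := fun n =>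
  if h : n < u.length then u.get ⟨n, h⟩ else x (n - u.length)

/-- The resid of a language of infinite words with respect to a finite word. -/
def resid {A : Type*} (L : Set (ℕ → A)) (u : List A) : Set (ℕ → A) := {x | wcat u x ∈ L}

/-- The infinite word `w^ω` obtained by repeating a (nonempty) finite word `w`. -/
def omegaPow {A : Type*} [Inhabited A] (w : List A) : ℕ → A :=
  fun n => w.getD (n % w.length) default

/-- The path obtained from `v` by following the positional strategy `σ`. -/
def stratPath {V A : Type*} (σ : V → A × V) (v : V) : ℕ → V
  | 0 => v
  | n + 1 => (σ (stratPath σ v n)).2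

/-- `W` is positional over Eve-games: in every (possibly infinite) Eve-game, i.e.
every `A`-labelled directed graph in which each vertex has an outgoing edge, there
is a single positional strategy winning from every vertex from which some winning
play exists. -/
def PositionalEve {A : Type u} (W : Set (ℕ → A)) : Prop :=
  ∀ (V : Type u) (E : V → A → V → Prop), (∀ v, ∃ a v', E v a v') →
    ∃ σ : V → A × V, (∀ v, E v (σ v).1 (σ v).2) ∧
      ∀ v, (∃ (ρ : ℕ → V) (lab : ℕ → A), ρ 0 = v ∧
              (∀ n, E (ρ n) (lab n) (ρ (n + 1))) ∧ lab ∈ W) →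
        (fun n => (σ (stratPath σ v n)).1) ∈ W

section Words

open Stream'

variable {A : Type*}

theorem wcat_eq_appendStream' (u : List A) (x : ℕ → A) : wcat u x = u ++ₛ x := by
  induction u with
  | nil => funext n; simp [wcat]; rfl
  | cons a u ih =>
    change _ = a :: (u ++ₛ x)
    rw [← ih]
    funext n
    cases n <;> simp [wcat, cons]

theorem appendStream'_omegaPow [Inhabited A] (v : List A) :
    v ++ₛ omegaPow v = omegaPow v := by
  refine (wcat_eq_appendStream' v (omegaPow v)).symm.trans (funext fun n => ?_)
  by_cases hn : n < v.length
  · simp [wcat, omegaPow, hn, Nat.mod_eq_of_lt hn]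
  · simp [wcat, omegaPow, hn, Nat.mod_eq_sub_mod (Nat.le_of_not_lt hn)]

end Words

section Plays

open Stream'

variable {V A : Type*}

def HasPlay (E : V → A → V → Prop) (t : V) (y : Stream' A) : Prop :=
  ∃ ρ : ℕ → V, ρ 0 = t ∧ ∀ n, E (ρ n) (y n) (ρ (n + 1))

theorem HasPlay.cons {E : V → A → V → Prop} {t t' : V} {a : A} {y : Stream' A}
    (he : E t a t') (h : HasPlay E t' y) : HasPlay E t (a :: y) := by
  obtain ⟨ρ, rfl, hρ⟩ := h
  exact ⟨fun | 0 => t | n + 1 => ρ n, rfl, fun | 0 => he | n + 1 => hρ n⟩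

theorem stratPath_labels_eq (σ : V → A × V) (f : V → Stream' A)
    (hf : ∀ t, f t = (σ t).1 :: f (σ t).2) (t : V) :
    (fun n => (σ (stratPath σ t n)).1) = f t := by
  have hdrop : ∀ n, f (stratPath σ t n) = drop n (f t) := by
    intro n
    induction n with
    | zero => rfl
    | succ n ih => rw [stratPath, ← tail_drop', ← ih, hf (stratPath σ t n), tail_cons]
  funext n
  change _ = (f t).get n
  rw [← head_drop, ← hdrop, hf]
  rfl

end Plays

section Lasso

variable {A : Type*} (b : A) (w : List A) (x : Stream' A)

/-- Vertex `inl l` still has to read `l` before reaching the branching vertex `inl []`, which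
either reads `b :: w` again or leaves for `inr x`; vertex `inr y` reads `y`. -/
def lassoEdge : List A ⊕ Stream' A → A → List A ⊕ Stream' A → Prop
  | .inl [], a, t => (a = b ∧ t = .inl w) ∨ (a = x.head ∧ t = .inr x.tail)
  | .inl (c :: l), a, t => a = c ∧ t = .inl l
  | .inr y, a, t => a = y.head ∧ t = .inr y.tail

theorem lassoEdge_total (t : List A ⊕ Stream' A) : ∃ a t', lassoEdge b w x t a t' := by
  rcases t with (_ | ⟨c, l⟩) | y
  · exact ⟨b, _, .inl ⟨rfl, rfl⟩⟩
  · exact ⟨c, _, rfl, rfl⟩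
  · exact ⟨y.head, _, rfl, rfl⟩

theorem hasPlay_lassoEdge_inr (y : Stream' A) : HasPlay (lassoEdge b w x) (.inr y) y :=
  ⟨fun n => .inr (y.drop n), rfl, fun n => ⟨(Stream'.head_drop y n).symm, by simp⟩⟩

theorem HasPlay.lassoEdge_inl {y : Stream' A} (h : HasPlay (lassoEdge b w x) (.inl []) y)
    (l : List A) : HasPlay (lassoEdge b w x) (.inl l) (l ++ₛ y) := by
  induction l with
  | nil => exact h
  | cons c l ih => exact (Stream'.cons_append_stream c l y).symm ▸ ih.cons ⟨rfl, rfl⟩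

theorem hasPlay_lassoEdge_detour (u : List A) :
    HasPlay (lassoEdge b w x) (.inl u) ((u ++ b :: w) ++ₛ x) := by
  have hx : HasPlay (lassoEdge b w x) (.inl []) x :=
    Stream'.eta x ▸ (hasPlay_lassoEdge_inr b w x x.tail).cons (.inr ⟨rfl, rfl⟩)
  have hbwx : HasPlay (lassoEdge b w x) (.inl []) ((b :: w) ++ₛ x) :=
    (Stream'.cons_append_stream b w x).symm ▸ (hx.lassoEdge_inl b w x w).cons (.inl ⟨rfl, rfl⟩)
  simpa using hbwx.lassoEdge_inl b w x u

theorem lassoEdge_stratPath_labels_of_branch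
    (σ : List A ⊕ Stream' A → A × (List A ⊕ Stream' A))
    (hσ : ∀ t, lassoEdge b w x t (σ t).1 (σ t).2) (z : Stream' A)
    (hz : z = Stream'.cons (σ (.inl [])).1 ((σ (.inl [])).2.elim (· ++ₛ z) id)) (u : List A) :
    (fun n => (σ (stratPath σ (.inl u) n)).1) = u ++ₛ z := by
  refine stratPath_labels_eq σ (Sum.elim (· ++ₛ z) id) ?_ (.inl u)
  rintro ((_ | ⟨c, l⟩) | y)
  · exact hz
  · obtain ⟨hc, hl⟩ := hσ (.inl (c :: l))
    simp only [Sum.elim_inl, hc, hl, Stream'.cons_append_stream]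
  · obtain ⟨hc, hl⟩ := hσ (.inr y)
    simp only [Sum.elim_inr, id, hc, hl, Stream'.eta]

theorem lassoEdge_stratPath_labels (z : Stream' A) (hz : (b :: w) ++ₛ z = z)
    (σ : List A ⊕ Stream' A → A × (List A ⊕ Stream' A))
    (hσ : ∀ t, lassoEdge b w x t (σ t).1 (σ t).2) (u : List A) :
    (fun n => (σ (stratPath σ (.inl u) n)).1) = u ++ₛ z ∨
      (fun n => (σ (stratPath σ (.inl u) n)).1) = u ++ₛ x := by
  rcases hσ (.inl []) with ⟨hc, ht⟩ | ⟨hc, ht⟩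
  · refine .inl (lassoEdge_stratPath_labels_of_branch b w x σ hσ z ?_ u)
    rw [hc, ht, Sum.elim_inl, ← Stream'.cons_append_stream, hz]
  · refine .inr (lassoEdge_stratPath_labels_of_branch b w x σ hσ x ?_ u)
    rw [hc, ht, Sum.elim_inr, id, Stream'.eta]

end Lasso

/-- Objectives positional over Eve-games are progress consistent. -/
theorem positional_progress_consistent {A : Type u} [Inhabited A]
    (W : Set (ℕ → A)) (hpos : PositionalEve W)
    (u v : List A) (hv : v ≠ [])
    (h : resid W u ⊂ resid W (u ++ v)) :
    wcat u (omegaPow v) ∈ W := by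
  obtain ⟨x, hux, hx⟩ := Set.exists_of_ssubset h
  obtain ⟨b, w, rfl⟩ := List.exists_cons_of_ne_nil hv
  simp only [resid, Set.mem_ofPred_eq] at hux hx
  obtain ⟨σ, hσE, hσW⟩ := hpos _ (lassoEdge b w x) (lassoEdge_total b w x)
  obtain ⟨ρ, hρ0, hρ⟩ := hasPlay_lassoEdge_detour b w x u
  have hwin := hσW (.inl u) ⟨ρ, _, hρ0, hρ, wcat_eq_appendStream' _ x ▸ hux⟩
  rcases lassoEdge_stratPath_labels b w x _ (appendStream'_omegaPow _) σ hσE u with hloop | hexit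
  · rwa [wcat_eq_appendStream', ← hloop]
  · exact absurd (by rwa [wcat_eq_appendStream', ← hexit]) hx
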